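/- Let H be a separable complex Hilbert space and ∂S(H) the set of rank-one orthogonal projections with its natural topology 𝒯 (the operator-norm topology, equivalently the initial topology of the transition-probability functions). Then the Borel σ-algebra Ξ(𝒯) equals the σ-algebra Σ generated by the family of functions h_Q : ∂S(H) → ℝ, h_Q(P) = tr(PQ), Q ∈ ∂S(H) (Misra's theorem). -/

import Mathlib

open scoped InnerProductSpace
open Metric

/-- The rank-one operator `χ ↦ ⟪φ, χ⟫ • φ` (orthogonal projection onto `ℂ φ` when `‖φ‖ = 1`). -/
noncomputable def proj (H : Type) [NormedAddCommGroup H] [InnerProductSpace ℂ H] (φ : H) :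
    H →L[ℂ] H := (innerSL ℂ φ).smulRight φ

/-- Equivalence of unit vectors up to a phase factor. -/
def phaseSetoid (H : Type) [NormedAddCommGroup H] [InnerProductSpace ℂ H] :
    Setoid (sphere (0 : H) 1) where
  r φ ψ := ∃ c : ℂ, ‖c‖ = 1 ∧ (φ : H) = c • (ψ : H)
  iseqv := by
    constructor
    · intro φ; exact ⟨1, by simp⟩
    · rintro φ ψ ⟨c, hc, h⟩
      have hc0 : c ≠ 0 := by intro h0; simp [h0] at hc
      exact ⟨c⁻¹, by simp [hc], by rw [h, smul_smul, inv_mul_cancel₀ hc0, one_smul]⟩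
    · rintro φ ψ ξ ⟨c, hc, h⟩ ⟨d, hd, h'⟩
      exact ⟨c * d, by simp [hc, hd], by rw [h, h', smul_smul]⟩

/-- The set of rank-one orthogonal projections (pure states) on `H`. -/
abbrev PureState (H : Type) [NormedAddCommGroup H] [InnerProductSpace ℂ H] : Type :=
  {P : H →L[ℂ] H // ∃ φ : H, ‖φ‖ = 1 ∧ P = proj H φ}

/-- The transition probability `h_Q(P) = tr(PQ) = ⟪φ, P φ⟫` where `Q = |φ⟩⟨φ|`. -/
noncomputable def transProb (H : Type) [NormedAddCommGroup H] [InnerProductSpace ℂ H]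
    (P Q : PureState H) : ℝ :=
  (⟪Q.2.choose, (P : H →L[ℂ] H) Q.2.choose⟫_ℂ).re

/-- The weak topology `𝒯₀` on the pure states: the coarsest topology making every
transition-probability function `P ↦ h_Q(P) = tr(PQ)` continuous. -/
noncomputable def weakTop (H : Type) [NormedAddCommGroup H] [InnerProductSpace ℂ H] :
    TopologicalSpace (PureState H) :=
  ⨅ Q : PureState H, TopologicalSpace.induced (fun P => transProb H P Q) inferInstance

/-! The topology `weakTop` generated by the transition probabilities `h_Q` is the norm topology:
each `h_Q` is norm-continuous, and conversely `‖P - Q‖² ≤ 8 (1 - h_Q(P))` (after fixing the phase of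
the unit vectors), so the sets `{h_Q > 1 - ε}` are small norm neighbourhoods of `Q`. Pure states
are a Lipschitz image of the unit sphere, hence second countable when `H` is separable; in a
second-countable space every open set of an initial topology is a countable union of finite
intersections of preimages of open sets, so the Borel σ-algebra is generated by the `h_Q`. -/

theorem borel_eq_iSup_comap_of_eq_iInf_induced {X ι : Type*} {Y : ι → Type*}
    [∀ i, TopologicalSpace (Y i)] [t : TopologicalSpace X] [SecondCountableTopology X]
    (f : ∀ i, X → Y i) (ht : t = ⨅ i, TopologicalSpace.induced (f i) inferInstance) :
    borel X = ⨆ i, MeasurableSpace.comap (f i) (borel (Y i)) := by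
  rw [borel_eq_generateFrom_of_subbasis (ht.trans (generateFrom_iUnion_isOpen _).symm),
    ← MeasurableSpace.iSup_generateFrom]
  simp_rw [← borel_comap]
  rfl

section RankOne

variable {H : Type} [NormedAddCommGroup H] [InnerProductSpace ℂ H]

lemma proj_apply (φ χ : H) : proj H φ χ = ⟪φ, χ⟫_ℂ • φ := rfl

lemma proj_smul_of_norm_eq_one {c : ℂ} (hc : ‖c‖ = 1) (φ : H) : proj H (c • φ) = proj H φ := by
  have hcc : (starRingEnd ℂ) c * c = 1 := by
    rw [mul_comm, Complex.mul_conj', hc]; norm_num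
  ext χ
  rw [proj_apply, proj_apply, inner_smul_left, smul_smul, mul_right_comm, hcc, one_mul]

lemma norm_proj_sub_proj_le {φ ψ : H} (hφ : ‖φ‖ ≤ 1) (hψ : ‖ψ‖ ≤ 1) :
    ‖proj H φ - proj H ψ‖ ≤ 2 * ‖φ - ψ‖ := by
  have hsplit : proj H φ - proj H ψ =
      (innerSL ℂ φ).smulRight (φ - ψ) + (innerSL ℂ (φ - ψ)).smulRight ψ := by
    ext χ
    simp only [sub_apply, add_apply, ContinuousLinearMap.smulRight_apply, innerSL_apply_apply,
      proj_apply, inner_sub_left, smul_sub, sub_smul]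
    abel
  rw [hsplit]
  refine (norm_add_le _ _).trans ?_
  rw [ContinuousLinearMap.norm_smulRight_apply, ContinuousLinearMap.norm_smulRight_apply,
    innerSL_apply_norm, innerSL_apply_norm]
  nlinarith [norm_nonneg (φ - ψ)]

lemma exists_norm_eq_one_inner_smul_eq_norm (φ ψ : H) :
    ∃ c : ℂ, ‖c‖ = 1 ∧ ⟪c • φ, ψ⟫_ℂ = ‖⟪φ, ψ⟫_ℂ‖ := by
  refine ⟨Complex.exp ((⟪φ, ψ⟫_ℂ).arg * Complex.I), Complex.norm_exp_ofReal_mul_I _, ?_⟩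
  rw [inner_smul_left, ← Complex.exp_conj]
  nth_rw 2 [← Complex.norm_mul_exp_arg_mul_I ⟪φ, ψ⟫_ℂ]
  rw [mul_left_comm, ← Complex.exp_add]
  simp

lemma norm_proj_sub_proj_sq_le {φ ψ : H} (hφ : ‖φ‖ = 1) (hψ : ‖ψ‖ = 1) :
    ‖proj H φ - proj H ψ‖ ^ 2 ≤ 8 * (1 - ‖⟪φ, ψ⟫_ℂ‖ ^ 2) := by
  obtain ⟨c, hc, hinner⟩ := exists_norm_eq_one_inner_smul_eq_norm φ ψ
  have hcφ : ‖c • φ‖ = 1 := by rw [norm_smul, hc, hφ, one_mul]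
  have hs : ‖⟪φ, ψ⟫_ℂ‖ ≤ 1 := by simpa [hφ, hψ] using norm_inner_le_norm (𝕜 := ℂ) φ ψ
  have hdist : ‖c • φ - ψ‖ ^ 2 = 2 - 2 * ‖⟪φ, ψ⟫_ℂ‖ := by
    rw [norm_sub_sq (𝕜 := ℂ), hinner, hcφ, hψ]
    simp only [RCLike.re_to_complex, Complex.ofReal_re]
    ring
  have hle := norm_proj_sub_proj_le hcφ.le hψ.le
  rw [proj_smul_of_norm_eq_one hc] at hle
  calc ‖proj H φ - proj H ψ‖ ^ 2 ≤ 4 * ‖c • φ - ψ‖ ^ 2 := by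
        nlinarith [norm_nonneg (proj H φ - proj H ψ)]
    _ ≤ 8 * (1 - ‖⟪φ, ψ⟫_ℂ‖ ^ 2) := by
        nlinarith [norm_nonneg ⟪φ, ψ⟫_ℂ]

lemma inner_proj_apply_self (φ ψ : H) : ⟪ψ, proj H φ ψ⟫_ℂ = (‖⟪φ, ψ⟫_ℂ‖ : ℂ) ^ 2 := by
  rw [proj_apply, inner_smul_right, ← inner_conj_symm φ ψ, mul_comm, Complex.mul_conj',
    RCLike.norm_conj]

end RankOne

namespace PureState

variable {H : Type} [NormedAddCommGroup H] [InnerProductSpace ℂ H]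

lemma transProb_eq (P Q : PureState H) :
    transProb H P Q = ‖⟪P.2.choose, Q.2.choose⟫_ℂ‖ ^ 2 := by
  have h := inner_proj_apply_self P.2.choose Q.2.choose
  rw [← P.2.choose_spec.2] at h
  rw [transProb, h]
  norm_cast

lemma transProb_self (P : PureState H) : transProb H P P = 1 := by
  rw [transProb_eq, inner_self_eq_norm_sq_to_K, P.2.choose_spec.1]
  simp

lemma dist_sq_le (P Q : PureState H) : dist P Q ^ 2 ≤ 8 * (1 - transProb H P Q) := by
  have h := norm_proj_sub_proj_sq_le P.2.choose_spec.1 Q.2.choose_spec.1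
  rwa [← P.2.choose_spec.2, ← Q.2.choose_spec.2, ← dist_eq_norm, ← Subtype.dist_eq,
    ← transProb_eq] at h

lemma continuous_transProb (Q : PureState H) : Continuous fun P : PureState H => transProb H P Q :=
  Complex.continuous_re.comp <| (innerSL ℂ Q.2.choose).continuous.comp <|
    (ContinuousLinearMap.apply ℂ H Q.2.choose).continuous.comp continuous_subtype_val

lemma weakTop_eq : weakTop H = (inferInstance : TopologicalSpace (PureState H)) := by
  refine le_antisymm ?_ (le_iInf fun Q => (continuous_transProb Q).le_induced)
  refine le_of_nhds_le_nhds fun P => Metric.nhds_basis_ball.ge_iff.2 fun ε hε => ?_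
  rw [weakTop, nhds_iInf]
  refine Filter.mem_iInf_of_mem P ?_
  rw [nhds_induced]
  refine ⟨Set.Ioi (1 - ε ^ 2 / 8), Ioi_mem_nhds ?_, fun P' hP' => ?_⟩
  · rw [transProb_self]; linarith [sq_pos_of_pos hε]
  have := dist_sq_le P' P
  rw [Set.mem_preimage, Set.mem_Ioi] at hP'
  rw [mem_ball]
  nlinarith [dist_nonneg (x := P') (y := P)]

instance [TopologicalSpace.SeparableSpace H] : SecondCountableTopology (PureState H) := by
  have : SecondCountableTopology H := UniformSpace.secondCountable_of_separable H
  let π : sphere (0 : H) 1 → PureState H := fun φ => ⟨proj H φ, φ, norm_eq_of_mem_sphere φ, rfl⟩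
  have hπ : LipschitzWith 2 π := LipschitzWith.of_dist_le_mul fun φ ψ => by
    simpa [π, Subtype.dist_eq, dist_eq_norm] using
      norm_proj_sub_proj_le (norm_eq_of_mem_sphere φ).le (norm_eq_of_mem_sphere ψ).le
  have hπ_surj : Function.Surjective π := by
    rintro ⟨_, φ, hφ, rfl⟩
    exact ⟨⟨φ, by simpa using hφ⟩, rfl⟩
  have := hπ_surj.denseRange.separableSpace hπ.continuous
  exact UniformSpace.secondCountable_of_separable _

end PureState

theorem stmt19_general (H : Type) [NormedAddCommGroup H] [InnerProductSpace ℂ H]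
    [TopologicalSpace.SeparableSpace H] :
    borel (PureState H) =
      ⨆ Q : PureState H,
        MeasurableSpace.comap (fun P => transProb H P Q) (borel ℝ) :=
  borel_eq_iSup_comap_of_eq_iInf_induced _ (PureState.weakTop_eq (H := H)).symm

/-- Misra's theorem: For separable `H`, the Borel σ-algebra of the set of
rank-one projections (with its natural topology, i.e. the operator-norm topology, which
coincides with the weak topology of the transition-probability functions) equals the
σ-algebra generated by the functions `h_Q : P ↦ tr(PQ)`. -/
theorem stmt19 (H : Type) [NormedAddCommGroup H] [InnerProductSpace ℂ H] [CompleteSpace H]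
    [TopologicalSpace.SeparableSpace H] :
    borel (PureState H) =
      ⨆ Q : PureState H,
        MeasurableSpace.comap (fun P => transProb H P Q) (borel ℝ) :=
  stmt19_general H
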